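/- Let A ∈ ℝⁿˣⁿ, B ∈ ℝⁿˣᵐ, C ∈ ℝᵖˣⁿ. If there exist J skew-symmetric, R ⪰ 0, Q ≻ 0 such that (Iₙ − B B†)(A − (J−R)Q) = 0 and (A − (J−R)Q)(C†C − Iₙ) = 0, then the matrix K = B†(A − (J−R)Q)C† satisfies A − BKC = (J − R)Q, and hence A − BKC is stable. -/

import Mathlib

open Matrix

noncomputable section

/-- A real square matrix is *stable* if every eigenvalue (over ℂ) has nonpositive
real part, and eigenvalues on the imaginary axis are semisimple
(i.e. ker((A-μI)²) = ker(A-μI)). -/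
def Matrix.IsStable {n : Type*} [Fintype n] [DecidableEq n] (A : Matrix n n ℝ) : Prop :=
  ∀ μ : ℂ, (A.map Complex.ofReal - μ • (1 : Matrix n n ℂ)).det = 0 →
    μ.re ≤ 0 ∧ (μ.re = 0 →
      ∀ v : n → ℂ,
        ((A.map Complex.ofReal - μ • 1) * (A.map Complex.ofReal - μ • 1)).mulVec v = 0 →
        (A.map Complex.ofReal - μ • 1).mulVec v = 0)

/-- `Ad` is the Moore–Penrose pseudoinverse of the real matrix `A`. -/
def IsMoorePenrose {m n : Type*} [Fintype m] [Fintype n]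
    (A : Matrix m n ℝ) (Ad : Matrix n m ℝ) : Prop :=
  A * Ad * A = A ∧ Ad * A * Ad = Ad ∧ (A * Ad).IsHermitian ∧ (Ad * A).IsHermitian

section Helpers

open scoped ComplexOrder

variable {n : ℕ}

lemma mapC_mul (M N : Matrix (Fin n) (Fin n) ℝ) :
    (M * N).map Complex.ofReal = M.map Complex.ofReal * N.map Complex.ofReal := by
  ext i j; simp [Matrix.mul_apply]

lemma mapC_sub (M N : Matrix (Fin n) (Fin n) ℝ) :
    (M - N).map Complex.ofReal = M.map Complex.ofReal - N.map Complex.ofReal := by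
  ext i j; simp

lemma mapC_transpose (M : Matrix (Fin n) (Fin n) ℝ) :
    (M.map Complex.ofReal)ᵀ = (Mᵀ).map Complex.ofReal := by
  ext i j; simp

lemma mapC_mulVec_star (M : Matrix (Fin n) (Fin n) ℝ) (x : Fin n → ℂ) :
    (M.map Complex.ofReal) *ᵥ star x = star ((M.map Complex.ofReal) *ᵥ x) := by
  ext i; simp [mulVec, dotProduct, Complex.conj_ofReal, mul_comm]

lemma dot_shift (M : Matrix (Fin n) (Fin n) ℂ) (x y : Fin n → ℂ) :
    x ⬝ᵥ (M *ᵥ y) = (Mᵀ *ᵥ x) ⬝ᵥ y := by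
  rw [dotProduct_mulVec, mulVec_transpose]

lemma star_dot (x y : Fin n → ℂ) : star (star x ⬝ᵥ y) = x ⬝ᵥ star y := by
  simp [dotProduct, mul_comm]

lemma posSemidef_mapC {M : Matrix (Fin n) (Fin n) ℝ} (hM : M.PosSemidef) :
    (M.map Complex.ofReal).PosSemidef := by
  obtain ⟨B, hB⟩ : ∃ B : Matrix (Fin n) (Fin n) ℝ, M = Bᵀ * B := by
    open scoped MatrixOrder in
    obtain ⟨B, hB⟩ := CStarAlgebra.nonneg_iff_eq_star_mul_self.mp hM.nonneg
    exact ⟨B, by rw [hB, star_eq_conjTranspose, conjTranspose_eq_transpose_of_trivial]⟩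
  have h : M.map Complex.ofReal = (B.map Complex.ofReal)ᴴ * (B.map Complex.ofReal) := by
    subst hB
    rw [mapC_mul]
    congr 1
    ext i j
    simp [conjTranspose_apply, Complex.conj_ofReal]
  rw [h]
  exact posSemidef_conjTranspose_mul_self _

lemma dh_isStable {J R Q : Matrix (Fin n) (Fin n) ℝ}
    (hJ : Jᵀ = -J) (hR : R.PosSemidef) (hQ : Q.PosDef) :
    ((J - R) * Q).IsStable := by
  intro μ hdet
  set Jc := J.map Complex.ofReal with hJc
  set Rc := R.map Complex.ofReal with hRc
  set Qc := Q.map Complex.ofReal with hQc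
  have hAc : ((J - R) * Q).map Complex.ofReal = (Jc - Rc) * Qc := by
    rw [hJc, hRc, hQc, mapC_mul, mapC_sub]
  have hQch : Qᵀ = Q := by
    have := hQ.1
    rwa [Matrix.IsHermitian, conjTranspose_eq_transpose_of_trivial] at this
  have hRch : Rᵀ = R := by
    have := hR.1
    rwa [Matrix.IsHermitian, conjTranspose_eq_transpose_of_trivial] at this
  have hQcsymm : Qcᵀ = Qc := by rw [hQc, mapC_transpose, hQch]
  have hRcsymm : Rcᵀ = Rc := by rw [hRc, mapC_transpose, hRch]
  have hJcskew : Jcᵀ = -Jc := by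
    rw [hJc, mapC_transpose, hJ]; ext i j; simp
  have hRcpsd : Rc.PosSemidef := posSemidef_mapC hR
  have hQcpsd : Qc.PosSemidef := posSemidef_mapC hQ.posSemidef
  have hQstar : ∀ x : Fin n → ℂ, Qc *ᵥ star x = star (Qc *ᵥ x) := by
    intro x; rw [hQc]; exact mapC_mulVec_star Q x
  have hJstar : ∀ x : Fin n → ℂ, Jc *ᵥ star x = star (Jc *ᵥ x) := by
    intro x; rw [hJc]; exact mapC_mulVec_star J x
  have hRstar : ∀ x : Fin n → ℂ, Rc *ᵥ star x = star (Rc *ᵥ x) := by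
    intro x; rw [hRc]; exact mapC_mulVec_star R x
  have hQcinj : ∀ x : Fin n → ℂ, Qc *ᵥ x = 0 → x = 0 := by
    have hinj : Function.Injective (Qc.mulVec) := by
      rw [Matrix.mulVec_injective_iff_isUnit, Matrix.isUnit_iff_isUnit_det]
      have hd : Qc.det = (Q.det : ℂ) := by
        rw [hQc]; exact (RingHom.map_det Complex.ofRealHom Q).symm
      rw [hd]
      simpa using hQ.det_pos.ne'
    intro x hx
    apply hinj
    simpa using hx
  have hswap : ∀ x y : Fin n → ℂ, star x ⬝ᵥ (Qc *ᵥ y) = (Qc *ᵥ star x) ⬝ᵥ y := by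
    intro x y
    rw [dot_shift, hQcsymm]
  -- key computation
  have key : ∀ (u : Fin n → ℂ), ((Jc - Rc) * Qc) *ᵥ u = μ • u →
      μ.re * (star u ⬝ᵥ (Qc *ᵥ u)).re
        = -(star (Qc *ᵥ u) ⬝ᵥ (Rc *ᵥ (Qc *ᵥ u))).re := by
    intro u heig
    have h1 : (Jc - Rc) *ᵥ (Qc *ᵥ u) = μ • u := by
      rw [mulVec_mulVec]; exact heig
    have h2 : star (Qc *ᵥ u) ⬝ᵥ ((Jc - Rc) *ᵥ (Qc *ᵥ u)) = μ * (star (Qc *ᵥ u) ⬝ᵥ u) := by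
      rw [h1, dotProduct_smul]; simp
    have hq : star (Qc *ᵥ u) ⬝ᵥ u = star u ⬝ᵥ (Qc *ᵥ u) := by
      rw [← hQstar u, ← hswap]
    have hjre : (star (Qc *ᵥ u) ⬝ᵥ (Jc *ᵥ (Qc *ᵥ u))).re = 0 := by
      set w := Qc *ᵥ u with hw
      have hconj : (starRingEnd ℂ) (star w ⬝ᵥ (Jc *ᵥ w)) = -(star w ⬝ᵥ (Jc *ᵥ w)) := by
        calc (starRingEnd ℂ) (star w ⬝ᵥ (Jc *ᵥ w))
            = star (star w ⬝ᵥ (Jc *ᵥ w)) := rfl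
          _ = w ⬝ᵥ star (Jc *ᵥ w) := star_dot _ _
          _ = w ⬝ᵥ (Jc *ᵥ star w) := by rw [hJstar]
          _ = (Jcᵀ *ᵥ w) ⬝ᵥ star w := by rw [dot_shift]
          _ = star w ⬝ᵥ ((-Jc) *ᵥ w) := by rw [hJcskew, dotProduct_comm]
          _ = -(star w ⬝ᵥ (Jc *ᵥ w)) := by rw [neg_mulVec, dotProduct_neg]
      have h := congrArg Complex.re hconj
      simp only [Complex.conj_re, Complex.neg_re] at h
      linarith
    have hrnn : 0 ≤ star (Qc *ᵥ u) ⬝ᵥ (Rc *ᵥ (Qc *ᵥ u)) := hRcpsd.dotProduct_mulVec_nonneg _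
    have hqnn : 0 ≤ star u ⬝ᵥ (Qc *ᵥ u) := hQcpsd.dotProduct_mulVec_nonneg u
    have hqim : (star u ⬝ᵥ (Qc *ᵥ u)).im = 0 := ((Complex.le_def.mp hqnn).2).symm.trans rfl |>.symm ▸ by
      have := (Complex.le_def.mp hqnn).2
      simpa using this.symm
    have h3 : star (Qc *ᵥ u) ⬝ᵥ (Jc *ᵥ (Qc *ᵥ u)) - star (Qc *ᵥ u) ⬝ᵥ (Rc *ᵥ (Qc *ᵥ u))
        = μ * (star u ⬝ᵥ (Qc *ᵥ u)) := by
      rw [← dotProduct_sub, ← sub_mulVec, h2, hq]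
    have h4 := congrArg Complex.re h3
    simp only [Complex.sub_re, Complex.mul_re, hjre, hqim] at h4
    linarith
  rw [hAc] at hdet ⊢
  obtain ⟨v, hv0, hv⟩ := (Matrix.exists_mulVec_eq_zero_iff).mpr hdet
  have hveig : ((Jc - Rc) * Qc) *ᵥ v = μ • v := by
    rw [sub_mulVec, smul_mulVec, one_mulVec, sub_eq_zero] at hv
    exact hv
  constructor
  · have hkey := key v hveig
    have hqnn : 0 ≤ star v ⬝ᵥ (Qc *ᵥ v) := hQcpsd.dotProduct_mulVec_nonneg v
    have hrnn : 0 ≤ star (Qc *ᵥ v) ⬝ᵥ (Rc *ᵥ (Qc *ᵥ v)) := hRcpsd.dotProduct_mulVec_nonneg _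
    have hrre : 0 ≤ (star (Qc *ᵥ v) ⬝ᵥ (Rc *ᵥ (Qc *ᵥ v))).re := (Complex.le_def.mp hrnn).1
    have hqpos : 0 < (star v ⬝ᵥ (Qc *ᵥ v)).re := by
      rcases lt_or_eq_of_le (Complex.le_def.mp hqnn).1 with h | h
      · exact h
      · exfalso
        have hq0 : star v ⬝ᵥ (Qc *ᵥ v) = 0 := by
          have hi := (Complex.le_def.mp hqnn).2
          apply Complex.ext
          · simpa using h.symm
          · simpa using hi.symm
        exact hv0 (hQcinj v ((hQcpsd.dotProduct_mulVec_zero_iff v).mp hq0))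
    nlinarith
  · intro hμre v' hv'
    have hu0 : ((Jc - Rc) * Qc - μ • 1) *ᵥ (((Jc - Rc) * Qc - μ • 1) *ᵥ v') = 0 := by
      rw [mulVec_mulVec]; exact hv'
    set u := ((Jc - Rc) * Qc - μ • 1) *ᵥ v' with hu
    have hueig : ((Jc - Rc) * Qc) *ᵥ u = μ • u := by
      rw [sub_mulVec, smul_mulVec, one_mulVec, sub_eq_zero] at hu0
      exact hu0
    suffices hzu : u = 0 by exact hzu
    -- R kills w := Qc u
    have hkey := key u hueig
    have hrnn : 0 ≤ star (Qc *ᵥ u) ⬝ᵥ (Rc *ᵥ (Qc *ᵥ u)) := hRcpsd.dotProduct_mulVec_nonneg _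
    have hr0 : star (Qc *ᵥ u) ⬝ᵥ (Rc *ᵥ (Qc *ᵥ u)) = 0 := by
      have hre : (star (Qc *ᵥ u) ⬝ᵥ (Rc *ᵥ (Qc *ᵥ u))).re = 0 := by
        rw [hμre] at hkey; linarith
      have him := (Complex.le_def.mp hrnn).2
      apply Complex.ext
      · simpa using hre
      · simpa using him.symm
    have hRw : Rc *ᵥ (Qc *ᵥ u) = 0 := (hRcpsd.dotProduct_mulVec_zero_iff _).mp hr0
    have hJw : Jc *ᵥ (Qc *ᵥ u) = μ • u := by
      have h := hueig
      rw [← mulVec_mulVec, sub_mulVec, hRw, sub_zero] at h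
      exact h
    have hμconj : (starRingEnd ℂ) μ = -μ := by
      apply Complex.ext <;> simp [hμre]
    -- the cross term
    have hcross : star u ⬝ᵥ (Qc *ᵥ (((Jc - Rc) * Qc) *ᵥ v'))
        = μ * (star u ⬝ᵥ (Qc *ᵥ v')) := by
      rw [hswap u, hQstar u, ← mulVec_mulVec, dot_shift]
      have htr : (Jc - Rc)ᵀ = -Jc - Rc := by
        rw [transpose_sub, hJcskew, hRcsymm]
      rw [htr]
      have harg : (-Jc - Rc) *ᵥ star (Qc *ᵥ u) = μ • star u := by
        have : (-Jc - Rc) *ᵥ star (Qc *ᵥ u)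
            = -(Jc *ᵥ star (Qc *ᵥ u)) - Rc *ᵥ star (Qc *ᵥ u) := by
          rw [sub_mulVec, neg_mulVec]
        rw [this, hJstar, hRstar, hJw, hRw, star_zero, sub_zero, star_smul,
          Complex.star_def, hμconj, neg_smul, neg_neg]
      rw [harg, smul_dotProduct]
      simp
    -- conclude
    have hudecomp : Qc *ᵥ u = Qc *ᵥ (((Jc - Rc) * Qc) *ᵥ v') - μ • (Qc *ᵥ v') := by
      rw [hu, sub_mulVec, smul_mulVec, one_mulVec, mulVec_sub, mulVec_smul]
    have hqu : star u ⬝ᵥ (Qc *ᵥ u) = 0 := by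
      calc star u ⬝ᵥ (Qc *ᵥ u)
          = star u ⬝ᵥ (Qc *ᵥ (((Jc - Rc) * Qc) *ᵥ v')) - μ * (star u ⬝ᵥ (Qc *ᵥ v')) := by
            rw [hudecomp, dotProduct_sub, dotProduct_smul]; simp
        _ = 0 := by rw [hcross]; ring
    exact hQcinj u ((hQcpsd.dotProduct_mulVec_zero_iff u).mp hqu)

end Helpers

/-- under the two-sided DH compatibility conditions, the feedback
K = B†(A − (J−R)Q)C† satisfies A − BKC = (J−R)Q, hence is stabilizing. -/
theorem sof_dh_feedback_stabilizes {n m p : ℕ} (A : Matrix (Fin n) (Fin n) ℝ)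
    (B : Matrix (Fin n) (Fin m) ℝ) (Bd : Matrix (Fin m) (Fin n) ℝ)
    (C : Matrix (Fin p) (Fin n) ℝ) (Cd : Matrix (Fin n) (Fin p) ℝ)
    (hBd : IsMoorePenrose B Bd) (hCd : IsMoorePenrose C Cd)
    (J R Q : Matrix (Fin n) (Fin n) ℝ)
    (hJ : Jᵀ = -J) (hR : R.PosSemidef) (hQ : Q.PosDef)
    (h1 : (1 - B * Bd) * (A - (J - R) * Q) = 0)
    (h2 : (A - (J - R) * Q) * (Cd * C - 1) = 0) :
    A - B * (Bd * (A - (J - R) * Q) * Cd) * C = (J - R) * Q ∧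
    (A - B * (Bd * (A - (J - R) * Q) * Cd) * C).IsStable := by
  have e1 : B * Bd * (A - (J - R) * Q) = A - (J - R) * Q := by
    have h := h1
    rw [sub_mul, one_mul, sub_eq_zero] at h
    exact h.symm
  have e2 : (A - (J - R) * Q) * (Cd * C) = A - (J - R) * Q := by
    have h := h2
    rw [mul_sub, mul_one, sub_eq_zero] at h
    exact h
  have emain : A - B * (Bd * (A - (J - R) * Q) * Cd) * C = (J - R) * Q := by
    have hBKC : B * (Bd * (A - (J - R) * Q) * Cd) * C = A - (J - R) * Q := by
      calc B * (Bd * (A - (J - R) * Q) * Cd) * C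
          = (B * Bd * (A - (J - R) * Q)) * (Cd * C) := by
            simp only [Matrix.mul_assoc]
        _ = (A - (J - R) * Q) * (Cd * C) := by rw [e1]
        _ = A - (J - R) * Q := e2
    rw [hBKC]
    abel
  refine ⟨emain, ?_⟩
  rw [emain]
  exact dh_isStable hJ hR hQ
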